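/- Let R be a commutative Noetherian ring (over ℝ) of real-valued functions on a set M, let A ⊆ R be a subalgebra, and let B be an ℝ-basis of A. Then there exist finitely many elements ρ_1, ..., ρ_k ∈ B such that for all p, q ∈ M: if ρ_i(p) = ρ_i(q) for all i = 1,...,k, then f(p) = f(q) for all f ∈ A. That is, a finite subset of any basis of A separates the same points as A. -/

import Mathlib

/-!
Each `f ∈ R` gives the element `1 ⊗ f - f ⊗ 1` of `R ⊗ R`, and the algebra map
`R ⊗ R → ℝ`, `g ⊗ h ↦ g p * h q` sends it to `f q - f p`. Since `R ⊗ R` is Noetherian,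
the ideal generated by these elements for `f ∈ B` is already generated by finitely many
of them, so the kernel of that map contains all of them as soon as it contains the finitely
many generators: finitely many `ρ ∈ B` separate the same points as `B`, hence as its
span `A`.
-/

open TensorProduct

theorem IsNoetherian.exists_finset_subset_span_image_eq {R N α : Type*} [Semiring R]
    [AddCommMonoid N] [Module R N] [IsNoetherian R N] (f : α → N) (S : Set α) :
    ∃ T : Finset α, ↑T ⊆ S ∧ Submodule.span R (f '' T) = Submodule.span R (f '' S) := by
  classical
  obtain ⟨t, hts, hspan⟩ := (Submodule.fg_span_iff_fg_span_finset_subset _).1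
    (IsNoetherian.noetherian (Submodule.span R (f '' S)))
  obtain ⟨T, hTS, rfl⟩ := Finset.subset_set_image_iff.1 hts
  exact ⟨T, hTS, by rw [hspan, Finset.coe_image]⟩

namespace Subalgebra

variable {k M : Type*} [CommRing k] (R : Subalgebra k (M → k))

def tensorDiff (f : R) : R ⊗[k] R := 1 ⊗ₜ[k] f - f ⊗ₜ[k] 1

def evalPair (p q : M) : R ⊗[k] R →ₐ[k] k :=
  Algebra.TensorProduct.lift ((Pi.evalAlgHom k (fun _ => k) p).comp R.val)
    ((Pi.evalAlgHom k (fun _ => k) q).comp R.val) fun _ _ => Commute.all _ _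

set_option synthInstance.maxHeartbeats 40000 in
theorem evalPair_tensorDiff (p q : M) (f : R) :
    R.evalPair p q (R.tensorDiff f) = (f : M → k) q - (f : M → k) p := by
  simp [tensorDiff, evalPair]

theorem exists_finset_separating [IsNoetherianRing (R ⊗[k] R)] (S : Set R) :
    ∃ T : Finset R, ↑T ⊆ S ∧ ∀ p q : M, (∀ t ∈ T, (t : M → k) p = (t : M → k) q) →
      ∀ s ∈ S, (s : M → k) p = (s : M → k) q := by
  obtain ⟨T, hTS, hspan⟩ :=
    IsNoetherian.exists_finset_subset_span_image_eq (R := R ⊗[k] R) R.tensorDiff S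
  refine ⟨T, hTS, fun p q hT s hs => ?_⟩
  have hker : Ideal.span (R.tensorDiff '' S) ≤ RingHom.ker (R.evalPair p q) := by
    rw [Ideal.span, ← hspan, Submodule.span_le]
    rintro _ ⟨t, ht, rfl⟩
    simp [evalPair_tensorDiff, hT t ht]
  have hs0 := hker (Ideal.subset_span ⟨s, hs, rfl⟩)
  rw [RingHom.mem_ker, evalPair_tensorDiff, sub_eq_zero] at hs0
  exact hs0.symm

end Subalgebra

theorem stmt_2_general {M : Type*} (R : Subalgebra ℝ (M → ℝ))
    [IsNoetherianRing (TensorProduct ℝ R R)]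
    (A : Subalgebra ℝ (M → ℝ)) (hAR : A ≤ R)
    (B : Set (M → ℝ))
    (hspan : Submodule.span ℝ B = Subalgebra.toSubmodule A) :
    ∃ (k : ℕ) (ρ : Fin k → (M → ℝ)), (∀ i, ρ i ∈ B) ∧
      ∀ p q : M, (∀ i, ρ i p = ρ i q) → ∀ f ∈ A, f p = f q := by
  have hBA : ∀ b ∈ B, b ∈ A := fun b hb => by
    rw [← Subalgebra.mem_toSubmodule, ← hspan]
    exact Submodule.subset_span hb
  obtain ⟨T, hTB, hT⟩ := R.exists_finset_separating {f : R | (f : M → ℝ) ∈ B}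
  obtain ⟨k, ⟨e⟩⟩ := Finite.exists_equiv_fin T
  refine ⟨k, fun i => (e.symm i : R), fun i => hTB (e.symm i).2, fun p q hρ f hf => ?_⟩
  have hB : ∀ b ∈ B, b p = b q := fun b hb =>
    hT p q (fun t ht => by simpa using hρ (e ⟨t, ht⟩)) ⟨b, hAR (hBA b hb)⟩ hb
  rw [← Subalgebra.mem_toSubmodule, ← hspan] at hf
  exact LinearMap.eqOn_span (f := LinearMap.proj (R := ℝ) (φ := fun _ => ℝ) p)
    (g := LinearMap.proj q) hB hf

/-- Let `R` be a commutative Noetherian `ℝ`-algebra of real-valued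
functions on a set `M` (more precisely, `R ⊗[ℝ] R` is Noetherian), `A ⊆ R` a
subalgebra and `B` an `ℝ`-basis of `A`. Then finitely many elements `ρ_1, …, ρ_k ∈ B`
separate the same points of `M` as all of `A`. -/
theorem stmt_2 {M : Type*} (R : Subalgebra ℝ (M → ℝ))
    [IsNoetherianRing (TensorProduct ℝ R R)]
    (A : Subalgebra ℝ (M → ℝ)) (hAR : A ≤ R)
    (B : Set (M → ℝ)) (hBA : B ⊆ (A : Set (M → ℝ)))
    (hspan : Submodule.span ℝ B = Subalgebra.toSubmodule A)
    (hli : LinearIndependent ℝ (fun b : B => (b : M → ℝ))) :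
    ∃ (k : ℕ) (ρ : Fin k → (M → ℝ)), (∀ i, ρ i ∈ B) ∧
      ∀ p q : M, (∀ i, ρ i p = ρ i q) → ∀ f ∈ A, f p = f q :=
  stmt_2_general R A hAR B hspan
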